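/- arXiv:2210.13027 — 2 statements merged into one kernel-verified Lean document; each statement's English description precedes it below -/
import Mathlib

section
/- Let (E^{(m)}) be positive random variables adapted to a filtration (F_m) such that |log E^{(m)}| ≤ s_m almost surely with Σ s_m²/m² < ∞, and such that W_m := E[log E^{(m)} | F_{m−1}] ≥ r_m > 0 with limsup_{M→∞} (1/M) Σ_{m=1}^M r_m > 0. Then for every α ∈ (0,1], P(∃ M, ∏_{m=1}^M E^{(m)} ≥ α⁻¹) = 1. -/
/-!
Write `log E^{(m)} = W_m + D_m`. The `D_m` are martingale differences bounded by `2 s_m`, so the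
martingale `∑ D_m / m` has orthogonal increments and is bounded in `L²` by `4 ∑ s_m² / m²`; it
converges almost surely, and Kronecker's lemma turns this into `(1/M) ∑_{m ≤ M} D_m → 0`.
Since `W_m ≥ r_m`, along the infinitely many `M` where the average of the `r_m` exceeds half its
limsup, `log ∏_{m ≤ M} E^{(m)}` grows linearly in `M`, so the product exceeds every threshold.
-/

open MeasureTheory Filter Finset Topology
open scoped ENNReal

theorem Filter.Tendsto.kronecker {x : ℕ → ℝ} {L : ℝ}
    (h : Tendsto (fun N : ℕ => ∑ k ∈ Icc 1 N, (k : ℝ)⁻¹ * x k) atTop (𝓝 L)) :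
    Tendsto (fun N : ℕ => (N : ℝ)⁻¹ * ∑ k ∈ Icc 1 N, x k) atTop (𝓝 0) := by
  set b : ℕ → ℝ := fun N => ∑ k ∈ Icc 1 N, (k : ℝ)⁻¹ * x k
  have summation_by_parts : ∀ N : ℕ, ∑ k ∈ Icc 1 N, x k = N * b N - ∑ j ∈ range N, b j := by
    intro N
    induction N with
    | zero => simp
    | succ N ih =>
      have hb : b (N + 1) = b N + ((N : ℝ) + 1)⁻¹ * x (N + 1) := by
        simp only [b, sum_Icc_succ_top (Nat.le_add_left 1 N), Nat.cast_succ]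
      have hN : (N : ℝ) + 1 ≠ 0 := by positivity
      rw [sum_Icc_succ_top (Nat.le_add_left 1 N), ih, sum_range_succ, hb]
      push_cast
      field_simp
      ring
  have hlim : Tendsto (fun N : ℕ => b N - (N : ℝ)⁻¹ * ∑ j ∈ range N, b j) atTop (𝓝 (L - L)) :=
    h.sub h.cesaro
  rw [sub_self] at hlim
  refine hlim.congr' ?_
  filter_upwards [eventually_ge_atTop 1] with N hN
  have hN : (N : ℝ) ≠ 0 := by positivity
  rw [summation_by_parts N]
  field_simp

namespace MeasureTheory

variable {Ω : Type*} {m0 : MeasurableSpace Ω} {μ : Measure Ω}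

theorem integral_mul_eq_zero_of_condExp_eq_zero {m : MeasurableSpace Ω} (hm : m ≤ m0)
    [SigmaFinite (μ.trim hm)] {f g : Ω → ℝ} (hf : StronglyMeasurable[m] f)
    (hfg : Integrable (f * g) μ) (hg : Integrable g μ) (hg0 : μ[g | m] =ᵐ[μ] 0) :
    ∫ ω, f ω * g ω ∂μ = 0 :=
  calc ∫ ω, f ω * g ω ∂μ = ∫ ω, μ[f * g | m] ω ∂μ := (integral_condExp hm).symm
    _ = ∫ ω, (f * μ[g | m]) ω ∂μ :=
      integral_congr_ae (condExp_mul_of_stronglyMeasurable_left hf hfg hg)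
    _ = ∫ _, (0 : ℝ) ∂μ := integral_congr_ae <| by
      filter_upwards [hg0] with ω hω
      simp [hω]
    _ = 0 := integral_zero _ _

theorem condExp_sub_condExp_ae_eq_zero {m : MeasurableSpace Ω} (hm : m ≤ m0)
    [SigmaFinite (μ.trim hm)] {f : Ω → ℝ} (hf : Integrable f μ) :
    μ[f - μ[f | m] | m] =ᵐ[μ] 0 := by
  filter_upwards [condExp_sub hf integrable_condExp m] with ω hω
  rw [hω, condExp_of_stronglyMeasurable hm stronglyMeasurable_condExp integrable_condExp]
  exact sub_self _

theorem ae_abs_sub_condExp_le {m : MeasurableSpace Ω} {f : Ω → ℝ} {c : ℝ}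
    (hf : ∀ᵐ ω ∂μ, |f ω| ≤ c) : ∀ᵐ ω ∂μ, |f ω - μ[f | m] ω| ≤ 2 * c := by
  filter_upwards [hf, ae_bdd_abs_condExp_of_ae_bdd_abs (m := m) hf] with ω h₁ h₂
  linarith [abs_sub (f ω) (μ[f | m] ω)]

theorem integral_sq_le_sq_of_ae_abs_le [IsProbabilityMeasure μ] {f : Ω → ℝ} {c : ℝ}
    (hf : ∀ᵐ ω ∂μ, |f ω| ≤ c) : ∫ ω, f ω ^ 2 ∂μ ≤ c ^ 2 := by
  have h := integral_mono_of_nonneg (ae_of_all μ fun ω => sq_nonneg (f ω))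
    (integrable_const (c ^ 2)) (hf.mono fun ω hω => sq_le_sq' (abs_le.1 hω).1 (abs_le.1 hω).2)
  simpa using h

theorem Submartingale.exists_ae_tendsto_of_integral_sq_le [IsFiniteMeasure μ]
    {ℱ : Filtration ℕ m0} {f : ℕ → Ω → ℝ} {C : ℝ} (hf : Submartingale f ℱ μ)
    (hsq : ∀ n, Integrable (fun ω => f n ω ^ 2) μ) (hC : ∀ n, ∫ ω, f n ω ^ 2 ∂μ ≤ C) :
    ∀ᵐ ω ∂μ, ∃ c, Tendsto (fun n => f n ω) atTop (𝓝 c) := by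
  refine hf.exists_ae_tendsto_of_bdd (R := ((μ.real Set.univ + C) / 2).toNNReal) fun n => ?_
  change _ ≤ ENNReal.ofReal _
  rw [eLpNorm_one_eq_lintegral_enorm, ← ofReal_integral_norm_eq_lintegral_enorm (hf.integrable n)]
  refine ENNReal.ofReal_le_ofReal ?_
  -- `|x| ≤ (1 + x²) / 2` turns the `L²` bound into an `L¹` bound
  calc ∫ ω, ‖f n ω‖ ∂μ ≤ ∫ ω, (1 + f n ω ^ 2) / 2 ∂μ :=
        integral_mono (hf.integrable n).norm (((integrable_const 1).add (hsq n)).div_const 2)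
          fun ω => by nlinarith [sq_nonneg (|f n ω| - 1), sq_abs (f n ω), Real.norm_eq_abs (f n ω)]
    _ = (μ.real Set.univ + ∫ ω, f n ω ^ 2 ∂μ) / 2 := by
        rw [integral_div, integral_add (integrable_const 1) (hsq n)]
        simp
    _ ≤ (μ.real Set.univ + C) / 2 := by linarith [hC n]

section PartialSums

variable {ℱ : Filtration ℕ m0} {D : ℕ → Ω → ℝ}

theorem stronglyAdapted_sum_Icc (hD : StronglyAdapted ℱ D) :
    StronglyAdapted ℱ fun N ω => ∑ m ∈ Icc 1 N, D m ω := fun _ =>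
  Finset.stronglyMeasurable_fun_sum _ fun m hm => (hD m).mono (ℱ.mono (mem_Icc.1 hm).2)

theorem memLp_sum_Icc {p : ℝ≥0∞} (hD : ∀ n, MemLp (D (n + 1)) p μ) (N : ℕ) :
    MemLp (fun ω => ∑ m ∈ Icc 1 N, D m ω) p μ := by
  refine memLp_finsetSum _ fun m hm => ?_
  obtain ⟨n, rfl⟩ : ∃ n, m = n + 1 := ⟨m - 1, by grind⟩
  exact hD n

variable [IsFiniteMeasure μ]

theorem martingale_sum_Icc (hD : StronglyAdapted ℱ D) (hint : ∀ n, Integrable (D (n + 1)) μ)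
    (h0 : ∀ n, μ[D (n + 1) | ℱ n] =ᵐ[μ] 0) :
    Martingale (fun N ω => ∑ m ∈ Icc 1 N, D m ω) ℱ μ := by
  have hS := stronglyAdapted_sum_Icc hD
  have hSint : ∀ N, Integrable (fun ω => ∑ m ∈ Icc 1 N, D m ω) μ := fun N =>
    memLp_one_iff_integrable.1 (memLp_sum_Icc (fun n => memLp_one_iff_integrable.2 (hint n)) N)
  refine martingale_nat hS hSint fun N => ?_
  have hstep : (fun ω => ∑ m ∈ Icc 1 (N + 1), D m ω)
      = (fun ω => ∑ m ∈ Icc 1 N, D m ω) + D (N + 1) := by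
    ext ω
    simp [sum_Icc_succ_top (Nat.le_add_left 1 N)]
  rw [hstep]
  filter_upwards [condExp_add (hSint N) (hint N) (ℱ N), h0 N] with ω h₁ h₂
  rw [h₁, Pi.add_apply, h₂, condExp_of_stronglyMeasurable (ℱ.le N) (hS N) (hSint N)]
  simp

theorem integral_sq_sum_Icc (hD : StronglyAdapted ℱ D) (hL2 : ∀ n, MemLp (D (n + 1)) 2 μ)
    (h0 : ∀ n, μ[D (n + 1) | ℱ n] =ᵐ[μ] 0) (N : ℕ) :
    ∫ ω, (∑ m ∈ Icc 1 N, D m ω) ^ 2 ∂μ = ∑ m ∈ Icc 1 N, ∫ ω, D m ω ^ 2 ∂μ := by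
  induction N with
  | zero => simp
  | succ N ih =>
    set S : Ω → ℝ := fun ω => ∑ m ∈ Icc 1 N, D m ω
    have hSD : Integrable (fun ω => S ω * D (N + 1) ω) μ :=
      (memLp_sum_Icc hL2 N).integrable_mul (hL2 N)
    have hcross : ∫ ω, S ω * D (N + 1) ω ∂μ = 0 :=
      integral_mul_eq_zero_of_condExp_eq_zero (ℱ.le N) (stronglyAdapted_sum_Icc hD N) hSD
        ((hL2 N).integrable one_le_two) (h0 N)
    have hS2 : Integrable (fun ω => S ω ^ 2) μ := (memLp_sum_Icc hL2 N).integrable_sq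
    calc ∫ ω, (∑ m ∈ Icc 1 (N + 1), D m ω) ^ 2 ∂μ
        = ∫ ω, (S ω ^ 2 + 2 * (S ω * D (N + 1) ω) + D (N + 1) ω ^ 2) ∂μ := by
          congr with ω
          rw [sum_Icc_succ_top (Nat.le_add_left 1 N)]
          ring
      _ = ∫ ω, S ω ^ 2 ∂μ + 2 * ∫ ω, S ω * D (N + 1) ω ∂μ + ∫ ω, D (N + 1) ω ^ 2 ∂μ := by
          rw [integral_add (hS2.fun_add (hSD.const_mul 2)) (hL2 N).integrable_sq,
            integral_add hS2 (hSD.const_mul 2), integral_const_mul]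
      _ = ∑ m ∈ Icc 1 (N + 1), ∫ ω, D m ω ^ 2 ∂μ := by
          rw [hcross, ih, sum_Icc_succ_top (Nat.le_add_left 1 N)]
          ring

theorem ae_tendsto_sum_Icc_of_summable_integral_sq (hD : StronglyAdapted ℱ D)
    (hL2 : ∀ n, MemLp (D (n + 1)) 2 μ) (h0 : ∀ n, μ[D (n + 1) | ℱ n] =ᵐ[μ] 0)
    (hsum : Summable fun m => ∫ ω, D m ω ^ 2 ∂μ) :
    ∀ᵐ ω ∂μ, ∃ c, Tendsto (fun N => ∑ m ∈ Icc 1 N, D m ω) atTop (𝓝 c) :=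
  (martingale_sum_Icc hD (fun n => (hL2 n).integrable one_le_two) h0).submartingale
    |>.exists_ae_tendsto_of_integral_sq_le (fun N => (memLp_sum_Icc hL2 N).integrable_sq)
      fun N => (integral_sq_sum_Icc hD hL2 h0 N).trans_le <|
        hsum.sum_le_tsum _ fun m _ => integral_nonneg fun ω => sq_nonneg (D m ω)

theorem ae_tendsto_inv_mul_sum_Icc_of_condExp_eq_zero (hD : StronglyAdapted ℱ D)
    (hL2 : ∀ n, MemLp (D (n + 1)) 2 μ) (h0 : ∀ n, μ[D (n + 1) | ℱ n] =ᵐ[μ] 0)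
    (hsum : Summable fun m : ℕ => (∫ ω, D m ω ^ 2 ∂μ) / (m : ℝ) ^ 2) :
    ∀ᵐ ω ∂μ, Tendsto (fun N : ℕ => (N : ℝ)⁻¹ * ∑ m ∈ Icc 1 N, D m ω) atTop (𝓝 0) := by
  set D' : ℕ → Ω → ℝ := fun m ω => (m : ℝ)⁻¹ * D m ω
  have hD' : StronglyAdapted ℱ D' := fun m => (hD m).const_mul _
  have hL2' : ∀ n, MemLp (D' (n + 1)) 2 μ := fun n => (hL2 n).const_mul _
  have h0' : ∀ n, μ[D' (n + 1) | ℱ n] =ᵐ[μ] 0 := fun n => by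
    change μ[((n + 1 : ℕ) : ℝ)⁻¹ • D (n + 1) | ℱ n] =ᵐ[μ] 0
    filter_upwards [condExp_smul (μ := μ) ((n + 1 : ℕ) : ℝ)⁻¹ (D (n + 1)) (ℱ n), h0 n]
      with ω h₁ h₂
    rw [h₁, Pi.smul_apply, h₂, Pi.zero_apply, smul_zero]
  have hsum' : Summable fun m => ∫ ω, D' m ω ^ 2 ∂μ := by
    refine hsum.congr fun m => ?_
    simp only [D', mul_pow, integral_const_mul, inv_pow]
    ring
  filter_upwards [ae_tendsto_sum_Icc_of_summable_integral_sq hD' hL2' h0' hsum'] with ω ⟨c, hc⟩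
  exact hc.kronecker

end PartialSums

theorem ae_tendsto_inv_mul_sum_Icc_of_ae_abs_le [IsProbabilityMeasure μ]
    {ℱ : Filtration ℕ m0} {D : ℕ → Ω → ℝ} {c : ℕ → ℝ} (hD : StronglyAdapted ℱ D)
    (hbd : ∀ n, ∀ᵐ ω ∂μ, |D (n + 1) ω| ≤ c (n + 1))
    (h0 : ∀ n, μ[D (n + 1) | ℱ n] =ᵐ[μ] 0) (hc : Summable fun m : ℕ => c m ^ 2 / (m : ℝ) ^ 2) :
    ∀ᵐ ω ∂μ, Tendsto (fun N : ℕ => (N : ℝ)⁻¹ * ∑ m ∈ Icc 1 N, D m ω) atTop (𝓝 0) := by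
  refine ae_tendsto_inv_mul_sum_Icc_of_condExp_eq_zero hD
    (fun n => MemLp.of_bound ((hD _).mono (ℱ.le _)).aestronglyMeasurable _ (hbd n)) h0 ?_
  refine hc.of_nonneg_of_le
    (fun m => div_nonneg (integral_nonneg fun ω => sq_nonneg _) (sq_nonneg _)) fun m => ?_
  rcases m with _ | n
  · simp
  · gcongr
    exact integral_sq_le_sq_of_ae_abs_le (hbd n)

end MeasureTheory

theorem exists_le_sum_Icc_of_limsup_pos {x r d : ℕ → ℝ} (hr : ∀ m, 1 ≤ m → 0 ≤ r m)
    (hlimsup : 0 < atTop.limsup fun M : ℕ => (1 / (M : ℝ)) * ∑ m ∈ Icc 1 M, r m)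
    (hd : Tendsto (fun N : ℕ => (N : ℝ)⁻¹ * ∑ m ∈ Icc 1 N, d m) atTop (𝓝 0))
    (hx : ∀ m, 1 ≤ m → r m + d m ≤ x m) (T : ℝ) : ∃ M, T ≤ ∑ m ∈ Icc 1 M, x m := by
  set L := atTop.limsup fun M : ℕ => (1 / (M : ℝ)) * ∑ m ∈ Icc 1 M, r m
  have hco : IsCoboundedUnder (· ≤ ·) atTop fun M : ℕ => (1 / (M : ℝ)) * ∑ m ∈ Icc 1 M, r m :=
    isCoboundedUnder_le_of_le atTop fun M =>
      mul_nonneg (by positivity) (sum_nonneg fun m hm => hr m (mem_Icc.1 hm).1)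
  have hr_freq := frequently_lt_of_lt_limsup hco (half_lt_self hlimsup)
  have hd_ev := hd.eventually (eventually_gt_nhds (neg_lt_zero.2 (half_pos (half_pos hlimsup))))
  have hT_ev : ∀ᶠ M : ℕ in atTop, T ≤ L / 4 * M :=
    (tendsto_natCast_atTop_atTop.const_mul_atTop (by positivity)).eventually_ge_atTop T
  obtain ⟨M, hrM, hdM, hTM, hM⟩ :=
    (hr_freq.and_eventually (hd_ev.and (hT_ev.and (eventually_ge_atTop 1)))).exists
  refine ⟨M, ?_⟩
  have hM0 : (0 : ℝ) < M := by exact_mod_cast hM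
  have hsum : ∑ m ∈ Icc 1 M, r m + ∑ m ∈ Icc 1 M, d m ≤ ∑ m ∈ Icc 1 M, x m := by
    rw [← sum_add_distrib]
    exact sum_le_sum fun m hm => hx m (mem_Icc.1 hm).1
  rw [one_div, inv_mul_eq_div, lt_div_iff₀ hM0] at hrM
  rw [inv_mul_eq_div, lt_div_iff₀ hM0] at hdM
  linarith

theorem stmt_13_general {Ω : Type*} {m0 : MeasurableSpace Ω} (μ : Measure Ω) [IsProbabilityMeasure μ]
    (ℱ : Filtration ℕ m0) (E : ℕ → Ω → ℝ) (s r : ℕ → ℝ)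
    (hadapt : Adapted ℱ E) (hpos : ∀ m ω, 0 < E m ω)
    (hint : ∀ m, Integrable (fun ω => Real.log (E m ω)) μ)
    (hbd : ∀ m : ℕ, 1 ≤ m → ∀ᵐ ω ∂μ, |Real.log (E m ω)| ≤ s m)
    (hsum : Summable fun m => (s m) ^ 2 / (m : ℝ) ^ 2)
    (hr : ∀ m : ℕ, 1 ≤ m → 0 < r m)
    (hW : ∀ m : ℕ, 1 ≤ m →
      ∀ᵐ ω ∂μ, r m ≤ (μ[fun ω' => Real.log (E m ω') | ℱ (m - 1)]) ω)
    (hlimsup : 0 < atTop.limsup (fun M : ℕ => (1 / (M : ℝ)) * ∑ m ∈ Finset.Icc 1 M, r m))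
    (α : ℝ) :
    μ {ω | ∃ M : ℕ, α⁻¹ ≤ ∏ m ∈ Finset.Icc 1 M, E m ω} = 1 := by
  set X : ℕ → Ω → ℝ := fun m ω => Real.log (E m ω)
  set D : ℕ → Ω → ℝ := fun m => X m - μ[X m | ℱ (m - 1)]
  have hD : StronglyAdapted ℱ D := fun m => (hadapt m).log.stronglyMeasurable.sub
    (stronglyMeasurable_condExp.mono (ℱ.mono (Nat.sub_le m 1)))
  have hDavg := ae_tendsto_inv_mul_sum_Icc_of_ae_abs_le (c := fun m => 2 * s m) hD
    (fun n => ae_abs_sub_condExp_le (hbd (n + 1) le_add_self))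
    (fun n => condExp_sub_condExp_ae_eq_zero (ℱ.le n) (hint (n + 1)))
    ((hsum.mul_left 4).congr fun m => by ring)
  have hWr : ∀ᵐ ω ∂μ, ∀ m, 1 ≤ m → r m ≤ μ[X m | ℱ (m - 1)] ω :=
    ae_all_iff.2 fun m => eventually_imp_distrib_left.2 (hW m)
  have hae : ∀ᵐ ω ∂μ, ∃ M : ℕ, α⁻¹ ≤ ∏ m ∈ Icc 1 M, E m ω := by
    filter_upwards [hDavg, hWr] with ω hDω hWω
    obtain ⟨M, hM⟩ := exists_le_sum_Icc_of_limsup_pos (x := fun m => X m ω)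
      (fun m hm => (hr m hm).le) hlimsup hDω
      (fun m hm => by linarith [hWω m hm, show D m ω = X m ω - μ[X m | ℱ (m - 1)] ω from rfl]) α⁻¹
    refine ⟨M, ?_⟩
    calc α⁻¹ ≤ ∑ m ∈ Icc 1 M, X m ω := hM
      _ ≤ Real.exp (∑ m ∈ Icc 1 M, X m ω) := by
        linarith [Real.add_one_le_exp (∑ m ∈ Icc 1 M, X m ω)]
      _ = ∏ m ∈ Icc 1 M, E m ω := by
        rw [Real.exp_sum]
        exact prod_congr rfl fun m _ => Real.exp_log (hpos m ω)
  rw [measure_congr (ae_eq_univ.2 hae), measure_univ]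

/-- Consistency of the sequential split likelihood ratio test: if `|log E^{(m)}| ≤ s_m` a.s.
with `Σ s_m²/m² < ∞`, and the conditional expected log e-values
`W_m = E[log E^{(m)} | F_{m−1}]` satisfy `W_m ≥ r_m > 0` with
`limsup (1/M) Σ_{m=1}^M r_m > 0`, then for every `α ∈ (0,1]` the product e-process crosses
`α⁻¹` almost surely. -/
theorem stmt_13 {Ω : Type*} {m0 : MeasurableSpace Ω} (μ : Measure Ω) [IsProbabilityMeasure μ]
    (ℱ : Filtration ℕ m0) (E : ℕ → Ω → ℝ) (s r : ℕ → ℝ)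
    (hadapt : Adapted ℱ E) (hpos : ∀ m ω, 0 < E m ω)
    (hint : ∀ m, Integrable (fun ω => Real.log (E m ω)) μ)
    (hbd : ∀ m : ℕ, 1 ≤ m → ∀ᵐ ω ∂μ, |Real.log (E m ω)| ≤ s m)
    (hsum : Summable fun m => (s m) ^ 2 / (m : ℝ) ^ 2)
    (hr : ∀ m : ℕ, 1 ≤ m → 0 < r m)
    (hW : ∀ m : ℕ, 1 ≤ m →
      ∀ᵐ ω ∂μ, r m ≤ (μ[fun ω' => Real.log (E m ω') | ℱ (m - 1)]) ω)
    (hlimsup : 0 < atTop.limsup (fun M : ℕ => (1 / (M : ℝ)) * ∑ m ∈ Finset.Icc 1 M, r m))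
    (α : ℝ) (hα0 : 0 < α) (hα1 : α ≤ 1) :
    μ {ω | ∃ M : ℕ, α⁻¹ ≤ ∏ m ∈ Finset.Icc 1 M, E m ω} = 1 :=
  stmt_13_general μ ℱ E s r hadapt hpos hint hbd hsum hr hW hlimsup α
end

section
/- Let Y be a Bernoulli random variable, and for a sample y₁,…,y_N ∈ {0,1} let q̂ := (Σ yₙ)/N be the MLE of the Bernoulli parameter. Let σ(g(xₙ)) ∈ (0,1) be arbitrary predicted probabilities. Then E(y₁,…,y_N) := ∏ₙ (σ(g(xₙ))/q̂)^{yₙ} ((1−σ(g(xₙ)))/(1−q̂))^{1−yₙ} satisfies E_{P}[E] ≤ 1 for every i.i.d. Bernoulli(q) law P on (Y₁,…,Y_N) with any q ∈ [0,1], where the denominator is the maximized Bernoulli likelihood. -/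
open scoped BigOperators

/-- The Bernoulli MLE `q̂ = (Σ yₙ)/N` for a label vector `y ∈ {0,1}^N`. -/
noncomputable def bernoulliMLE (N : ℕ) (y : Fin N → Bool) : ℝ :=
  (∑ n : Fin N, if y n then (1 : ℝ) else 0) / N

/-! With `L_p(y) = ∏ᵢ pᵢ^{yᵢ} (1 - pᵢ)^{1 - yᵢ}`, the e-variable is `L_σ(y) / L_{q̂(y)}(y)`, and
`L_{q̂(y)}(y) > 0` because a label occurring in `y` has positive empirical frequency. The empirical
frequency maximizes `q ↦ L_q(y)` (weighted AM–GM), so each term `L_σ(y) / L_{q̂(y)}(y) · L_q(y)` of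
the expectation is at most `L_σ(y)`, and these sum to `∏ᵢ (σᵢ + (1 - σᵢ)) = 1`. -/

open Finset

theorem pow_mul_one_sub_pow_le_of_mul_eq {a q : ℝ} (k m : ℕ) (ha₀ : 0 < a) (ha₁ : a < 1)
    (hak : a * (k + m) = k) (hq₀ : 0 ≤ q) (hq₁ : q ≤ 1) :
    q ^ k * (1 - q) ^ m ≤ a ^ k * (1 - a) ^ m := by
  have hb₀ : 0 < 1 - a := by linarith
  have hu : 0 ≤ q / a := by positivity
  have hv : 0 ≤ (1 - q) / (1 - a) := div_nonneg (by linarith) hb₀.le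
  have hamgm : (q / a) ^ a * ((1 - q) / (1 - a)) ^ (1 - a) ≤ 1 := by
    have := Real.geom_mean_le_arith_mean2_weighted ha₀.le hb₀.le hu hv (add_sub_cancel a 1)
    rwa [mul_div_cancel₀ _ ha₀.ne', mul_div_cancel₀ _ hb₀.ne', add_sub_cancel] at this
  have hbm : (1 - a) * (k + m) = m := by linarith
  have hpow : (q / a) ^ k * ((1 - q) / (1 - a)) ^ m ≤ 1 := by
    have := Real.rpow_le_one (by positivity) hamgm (by positivity : (0 : ℝ) ≤ k + m)
    rwa [Real.mul_rpow (by positivity) (by positivity), ← Real.rpow_mul hu, ← Real.rpow_mul hv,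
      hak, hbm, Real.rpow_natCast, Real.rpow_natCast] at this
  rwa [div_pow, div_pow, div_mul_div_comm, div_le_one (by positivity)] at hpow

theorem pow_mul_one_sub_pow_le (k m : ℕ) {q : ℝ} (hq₀ : 0 ≤ q) (hq₁ : q ≤ 1) :
    q ^ k * (1 - q) ^ m ≤ ((k : ℝ) / (k + m)) ^ k * (1 - (k : ℝ) / (k + m)) ^ m := by
  have hle : q ^ k * (1 - q) ^ m ≤ 1 :=
    mul_le_one₀ (pow_le_one₀ hq₀ hq₁) (pow_nonneg (by linarith) _)
      (pow_le_one₀ (by linarith) (by linarith))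
  rcases Nat.eq_zero_or_pos k with rfl | hk
  · simpa using hle
  rcases Nat.eq_zero_or_pos m with rfl | hm
  · simpa [hk.ne'] using hle
  have hkm : (0 : ℝ) < k + m := by positivity
  refine pow_mul_one_sub_pow_le_of_mul_eq k m (by positivity) ?_ (div_mul_cancel₀ _ hkm.ne')
    hq₀ hq₁
  rw [div_lt_one hkm]
  exact_mod_cast Nat.lt_add_of_pos_right hm

section BernoulliLikelihood

variable {ι : Type*} [Fintype ι]

def bernoulliLikelihood (p : ι → ℝ) (y : ι → Bool) : ℝ :=
  ∏ i, if y i then p i else 1 - p i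

theorem sum_bernoulliLikelihood [DecidableEq ι] (p : ι → ℝ) :
    ∑ y, bernoulliLikelihood p y = 1 := by
  unfold bernoulliLikelihood
  rw [← Fintype.prod_sum fun i (b : Bool) => if b then p i else 1 - p i]
  simp

theorem bernoulliLikelihood_nonneg {p : ι → ℝ} (hp : ∀ i, p i ∈ Set.Icc 0 1) (y : ι → Bool) :
    0 ≤ bernoulliLikelihood p y :=
  prod_nonneg fun i _ => by
    obtain ⟨h₀, h₁⟩ := hp i
    split <;> linarith

theorem bernoulliLikelihood_const (a : ℝ) (y : ι → Bool) :
    bernoulliLikelihood (fun _ => a) y = a ^ #{i | y i} * (1 - a) ^ #{i | ¬ y i} := by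
  rw [bernoulliLikelihood, prod_ite, prod_const, prod_const]

theorem bernoulliLikelihood_const_le_frequency (y : ι → Bool) {q : ℝ} (hq : q ∈ Set.Icc 0 1) :
    bernoulliLikelihood (fun _ => q) y ≤
      bernoulliLikelihood (fun _ => (#{i | y i} : ℝ) / Fintype.card ι) y := by
  have hcard : (Fintype.card ι : ℝ) = #{i | y i} + #{i | ¬ y i} := by
    exact_mod_cast (card_filter_add_card_filter_not (s := univ) (fun i => y i)).symm
  rw [bernoulliLikelihood_const, bernoulliLikelihood_const, hcard]
  exact pow_mul_one_sub_pow_le _ _ hq.1 hq.2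

theorem bernoulliLikelihood_frequency_pos (y : ι → Bool) :
    0 < bernoulliLikelihood (fun _ => (#{i | y i} : ℝ) / Fintype.card ι) y := by
  refine prod_pos fun i _ => ?_
  have hn : (0 : ℝ) < Fintype.card ι := by
    have : Nonempty ι := ⟨i⟩
    exact_mod_cast Fintype.card_pos
  split
  case isTrue hi =>
    exact div_pos (by exact_mod_cast card_pos.mpr ⟨i, by simp [hi]⟩) hn
  case isFalse hi =>
    have : #{i | y i} < Fintype.card ι := card_lt_card (filter_ssubset.mpr ⟨i, mem_univ i, hi⟩)
    rw [sub_pos, div_lt_one hn]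
    exact_mod_cast this

theorem prod_ite_div_eq_bernoulliLikelihood_div (p : ι → ℝ) (a : ℝ) (y : ι → Bool) :
    ∏ i, (if y i then p i / a else (1 - p i) / (1 - a)) =
      bernoulliLikelihood p y / bernoulliLikelihood (fun _ => a) y := by
  rw [bernoulliLikelihood, bernoulliLikelihood, ← prod_div_distrib]
  exact prod_congr rfl fun i _ => by split <;> rfl

end BernoulliLikelihood

theorem bernoulliMLE_eq_card_div (N : ℕ) (y : Fin N → Bool) :
    bernoulliMLE N y = (#{n | y n} : ℝ) / Fintype.card (Fin N) := by
  rw [bernoulliMLE, sum_boole, Fintype.card_fin]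

theorem stmt_14_general (N : ℕ) (σg : Fin N → ℝ)
    (hσ : ∀ n, σg n ∈ Set.Ioo (0 : ℝ) 1) (q : ℝ) (hq : q ∈ Set.Icc (0 : ℝ) 1) :
    ∑ y : Fin N → Bool,
      (∏ n : Fin N,
          if y n then σg n / bernoulliMLE N y
          else (1 - σg n) / (1 - bernoulliMLE N y)) *
        (∏ n : Fin N, if y n then q else 1 - q) ≤ 1 := by
  calc _ ≤ ∑ y, bernoulliLikelihood σg y := sum_le_sum fun y _ => ?_
    _ = 1 := sum_bernoulliLikelihood σg
  rw [prod_ite_div_eq_bernoulliLikelihood_div, bernoulliMLE_eq_card_div, div_mul_eq_mul_div,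
    div_le_iff₀ (bernoulliLikelihood_frequency_pos y)]
  exact mul_le_mul_of_nonneg_left (bernoulliLikelihood_const_le_frequency y hq)
    (bernoulliLikelihood_nonneg (fun n => Set.Ioo_subset_Icc_self (hσ n)) y)

/-- The E-C2ST e-variable: the ratio of a classifier-based predictive Bernoulli likelihood
`∏ σ(g(xₙ))^{yₙ}(1−σ(g(xₙ)))^{1−yₙ}` to the maximized Bernoulli likelihood
`∏ q̂^{yₙ}(1−q̂)^{1−yₙ}` has expectation at most 1 under every i.i.d. Bernoulli(q) law on the
labels, for any `q ∈ [0,1]`. -/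
theorem stmt_14 (N : ℕ) (hN : 0 < N) (σg : Fin N → ℝ)
    (hσ : ∀ n, σg n ∈ Set.Ioo (0 : ℝ) 1) (q : ℝ) (hq : q ∈ Set.Icc (0 : ℝ) 1) :
    ∑ y : Fin N → Bool,
      (∏ n : Fin N,
          if y n then σg n / bernoulliMLE N y
          else (1 - σg n) / (1 - bernoulliMLE N y)) *
        (∏ n : Fin N, if y n then q else 1 - q) ≤ 1 :=
  stmt_14_general N σg hσ q hq
end
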